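/- arXiv:2109.03987 — 4 statements merged into one kernel-verified Lean document; each statement's English description precedes it below -/
import Mathlib

section
/- Let p and q be positive integers and s a nonzero integer, and assume gcd(p, s) = 1 or gcd(q, s) = 1. Set m = p·q. Then the subgroup A = {(a, b) ∈ ℤ/m × ℤ/m : p·a = 0 and q·b = s·a} of the additive group (ℤ/m) × (ℤ/m) is isomorphic, as an additive group, to ℤ/m. -/
/-- The subgroup `A = {(a, b) : p·a = 0 ∧ q·b = s·a}` of `(ℤ/m) × (ℤ/m)`. -/
def kummerKernelSubgroup (m p q : ℕ) (s : ℤ) :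
    AddSubgroup (ZMod m × ZMod m) where
  carrier := {x | (p : ℤ) • x.1 = 0 ∧ (q : ℤ) • x.2 = s • x.1}
  zero_mem' := by simp
  add_mem' := by
    rintro a b ⟨ha1, ha2⟩ ⟨hb1, hb2⟩
    refine ⟨?_, ?_⟩ <;> simp only [Prod.fst_add, Prod.snd_add, smul_add, ha1, ha2, hb1, hb2,
      add_zero]
  neg_mem' := by
    rintro a ⟨h1, h2⟩
    refine ⟨?_, ?_⟩ <;> simp only [Prod.fst_neg, Prod.snd_neg, smul_neg, h1, h2, neg_zero]

/-- Let `p, q` be positive integers and `s` a nonzero integer with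
`gcd(p, s) = 1` or `gcd(q, s) = 1`, and set `m = p·q`. Then the subgroup
`A = {(a, b) ∈ ℤ/m × ℤ/m : p·a = 0 ∧ q·b = s·a}` is isomorphic to `ℤ/m`. -/
theorem kummer_kernel_iso_zmod (p q : ℕ) (hp : 0 < p) (hq : 0 < q) (s : ℤ) (hs : s ≠ 0)
    (hcop : Int.gcd (p : ℤ) s = 1 ∨ Int.gcd (q : ℤ) s = 1) :
    Nonempty (kummerKernelSubgroup (p * q) p q s ≃+ ZMod (p * q)) := by
  set m := p * q with hm
  have hpq : (p : ZMod m) * (q : ZMod m) = 0 := by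
    have h0 := ZMod.natCast_self m
    rw [hm] at h0
    push_cast at h0
    exact h0
  have hmem : ∀ z : ZMod m × ZMod m, z ∈ kummerKernelSubgroup m p q s ↔
      (p : ZMod m) * z.1 = 0 ∧ (q : ZMod m) * z.2 = (s : ZMod m) * z.1 := by
    intro z
    show ((p : ℤ) • z.1 = 0 ∧ (q : ℤ) • z.2 = s • z.1) ↔ _
    rw [zsmul_eq_mul, zsmul_eq_mul, zsmul_eq_mul, Int.cast_natCast, Int.cast_natCast]
  rcases hcop with h | h
  · -- gcd(p, s) = 1 : the second projection is bijective
    obtain ⟨u, v, huv⟩ := Int.isCoprime_iff_gcd_eq_one.mpr h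
    have key : (u : ZMod m) * (p : ZMod m) + (v : ZMod m) * (s : ZMod m) = 1 := by
      have := congrArg (fun t : ℤ => (t : ZMod m)) huv
      push_cast at this
      exact this
    let f : kummerKernelSubgroup m p q s →+ ZMod m :=
      AddMonoidHom.mk' (fun z => (z : ZMod m × ZMod m).2)
        (by intro a b; simp)
    have hinj : Function.Injective f := by
      rw [injective_iff_map_eq_zero]
      rintro ⟨⟨a, b⟩, hz⟩ hfz
      obtain ⟨h1, h2⟩ := (hmem _).mp hz
      have hb : b = 0 := hfz
      rw [hb, mul_zero] at h2
      have ha : a = 0 := by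
        linear_combination (u : ZMod m) * h1 - (v : ZMod m) * h2 - a * key
      exact Subtype.ext (Prod.ext ha hb)
    have hsurj : Function.Surjective f := by
      intro c
      refine ⟨⟨((v : ZMod m) * (q : ZMod m) * c, c), (hmem _).mpr ⟨?_, ?_⟩⟩, rfl⟩
      · linear_combination (v : ZMod m) * c * hpq
      · linear_combination (u : ZMod m) * c * hpq - (q : ZMod m) * c * key
    exact ⟨AddEquiv.ofBijective f ⟨hinj, hsurj⟩⟩
  · -- gcd(q, s) = 1 : use the functional x·a + y·b
    obtain ⟨x, y, hxy⟩ := Int.isCoprime_iff_gcd_eq_one.mpr h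
    have key : (x : ZMod m) * (q : ZMod m) + (y : ZMod m) * (s : ZMod m) = 1 := by
      have := congrArg (fun t : ℤ => (t : ZMod m)) hxy
      push_cast at this
      exact this
    let f : kummerKernelSubgroup m p q s →+ ZMod m :=
      AddMonoidHom.mk' (fun z =>
        (x : ZMod m) * (z : ZMod m × ZMod m).1 + (y : ZMod m) * (z : ZMod m × ZMod m).2)
        (by intro a b; simp [mul_add]; ring)
    have hinj : Function.Injective f := by
      rw [injective_iff_map_eq_zero]
      rintro ⟨⟨a, b⟩, hz⟩ hfz
      obtain ⟨h1, h2⟩ := (hmem _).mp hz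
      have hf : (x : ZMod m) * a + (y : ZMod m) * b = 0 := hfz
      have ha : a = 0 := by
        linear_combination -(y : ZMod m) * h2 + (q : ZMod m) * hf - a * key
      rw [ha, mul_zero] at h2
      rw [ha, mul_zero, zero_add] at hf
      have hb : b = 0 := by
        linear_combination (x : ZMod m) * h2 + (s : ZMod m) * hf - b * key
      exact Subtype.ext (Prod.ext ha hb)
    have hsurj : Function.Surjective f := by
      intro c
      refine ⟨⟨((q : ZMod m) * c, (s : ZMod m) * c), (hmem _).mpr ⟨?_, ?_⟩⟩, ?_⟩
      · linear_combination c * hpq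
      · ring
      · show (x : ZMod m) * ((q : ZMod m) * c) + (y : ZMod m) * ((s : ZMod m) * c) = c
        linear_combination c * key
    exact ⟨AddEquiv.ofBijective f ⟨hinj, hsurj⟩⟩
end

section
/- Let d₁ and d₂ be positive integers and s an integer with gcd(d₁, s) = 1, and set m = d₁·d₂. Let φ and φ̌ denote the additive endomorphisms of (ℤ/m)⁴ given by multiplication by the integer matrices φ = [[0,0,d₁,0],[0,0,0,d₂],[−d₁,0,0,0],[0,−d₂,0,0]] and φ̌ = [[0,0,−d₂,0],[0,0,0,−d₁],[d₂,0,0,0],[0,d₁,0,0]] (entries reduced modulo m). Then the subgroup G = {(a, b) ∈ (ℤ/m)⁴ × (ℤ/m)⁴ : φ(a) = 0 and φ̌(b) = s·a} is isomorphic, as an additive group, to (ℤ/m)⁴. -/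
/-- The coordinate matrix of the polarization isogeny `φ` of a `(d₁, d₂)`-polarized
abelian surface. -/
def polMat (d1 d2 : ℕ) : Matrix (Fin 4) (Fin 4) ℤ :=
  !![0, 0, (d1 : ℤ), 0; 0, 0, 0, (d2 : ℤ); -(d1 : ℤ), 0, 0, 0; 0, -(d2 : ℤ), 0, 0]

/-- The coordinate matrix of the dual polarization isogeny `φ̌`. -/
def dualPolMat (d1 d2 : ℕ) : Matrix (Fin 4) (Fin 4) ℤ :=
  !![0, 0, -(d2 : ℤ), 0; 0, 0, 0, -(d1 : ℤ); (d2 : ℤ), 0, 0, 0; 0, (d1 : ℤ), 0, 0]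

/-- The subgroup `G = {(a, b) ∈ (ℤ/m)⁴ × (ℤ/m)⁴ : φ(a) = 0 ∧ φ̌(b) = s·a}`,
where `φ` and `φ̌` act by matrix multiplication with entries reduced mod `m`. -/
def galoisSubgroup (m d1 d2 : ℕ) (s : ℤ) :
    AddSubgroup ((Fin 4 → ZMod m) × (Fin 4 → ZMod m)) where
  carrier := {x | ((polMat d1 d2).map (Int.cast : ℤ → ZMod m)).mulVec x.1 = 0 ∧
    ((dualPolMat d1 d2).map (Int.cast : ℤ → ZMod m)).mulVec x.2 = s • x.1}
  zero_mem' := by simp [Matrix.mulVec_zero]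
  add_mem' := by
    rintro a b ⟨ha1, ha2⟩ ⟨hb1, hb2⟩
    refine ⟨?_, ?_⟩ <;>
      simp only [Prod.fst_add, Prod.snd_add, Matrix.mulVec_add, smul_add, ha1, ha2, hb1, hb2,
        add_zero]
  neg_mem' := by
    rintro a ⟨h1, h2⟩
    refine ⟨?_, ?_⟩ <;>
      simp only [Prod.fst_neg, Prod.snd_neg, Matrix.mulVec_neg, smul_neg, h1, h2, neg_zero]

lemma exists_mul_of_mul_eq_zero' {m p q : ℕ} (hm : m = p * q) (hp : 0 < p)
    (hq : 0 < q) {x : ZMod m} (hx : (p : ZMod m) * x = 0) :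
    ∃ w : ZMod m, x = (q : ZMod m) * w := by
  have hmne : NeZero m := ⟨by simp [hm]; omega⟩
  have hx' : ((p * x.val : ℕ) : ZMod m) = 0 := by
    push_cast
    rw [ZMod.natCast_val, ZMod.cast_id]
    exact hx
  rw [ZMod.natCast_eq_zero_iff] at hx'
  have hx'' : p * q ∣ p * x.val := by rw [← hm]; exact hx'
  obtain ⟨c, hc⟩ := (Nat.mul_dvd_mul_iff_left hp).mp hx''
  refine ⟨(c : ZMod m), ?_⟩
  have hxx : x = ((x.val : ℕ) : ZMod m) := by rw [ZMod.natCast_val, ZMod.cast_id]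
  rw [hxx, hc]
  push_cast
  ring

/-- The parametrizing homomorphism. -/
def Fmap (m d1 d2 : ℕ) (s v : ℤ) :
    (Fin 4 → ZMod m) →+ ((Fin 4 → ZMod m) × (Fin 4 → ZMod m)) where
  toFun t :=
    (![-((v : ZMod m) * (d2 : ZMod m)) * t 0, (d1 : ZMod m) * t 1,
       (v : ZMod m) * (d2 : ZMod m) * t 2, (d1 : ZMod m) * t 3],
     ![t 2, (s : ZMod m) * t 3, t 0, -(s : ZMod m) * t 1])
  map_zero' := by
    refine Prod.ext ?_ ?_ <;> funext i <;> fin_cases i <;> simp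
  map_add' t1 t2 := by
    refine Prod.ext ?_ ?_ <;> funext i <;> fin_cases i <;> simp <;> ring

@[simp] lemma Fmap_apply (m d1 d2 : ℕ) (s v : ℤ) (t : Fin 4 → ZMod m) :
    Fmap m d1 d2 s v t =
    (![-((v : ZMod m) * (d2 : ZMod m)) * t 0, (d1 : ZMod m) * t 1,
       (v : ZMod m) * (d2 : ZMod m) * t 2, (d1 : ZMod m) * t 3],
     ![t 2, (s : ZMod m) * t 3, t 0, -(s : ZMod m) * t 1]) := rfl

/-- Let `d₁, d₂` be positive integers, `s` an integer with `gcd(d₁, s) = 1`, and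
`m = d₁·d₂`. Then the group `G = {(a, b) : φ(a) = 0 ∧ φ̌(b) = s·a}` is isomorphic to
`(ℤ/m)⁴`. -/
theorem galois_group_iso (d1 d2 : ℕ) (hd1 : 0 < d1) (hd2 : 0 < d2) (s : ℤ)
    (hcop : Int.gcd (d1 : ℤ) s = 1) :
    Nonempty (galoisSubgroup (d1 * d2) d1 d2 s ≃+ (Fin 4 → ZMod (d1 * d2))) := by
  set m := d1 * d2 with hm
  obtain ⟨u, v, huv⟩ := Int.isCoprime_iff_gcd_eq_one.mpr hcop
  have key2 : (d1 : ZMod m) * (d2 : ZMod m) = 0 := by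
    have h : ((d1 * d2 : ℕ) : ZMod m) = 0 := by rw [← hm]; exact ZMod.natCast_self m
    push_cast at h; exact h
  have key1 : (v : ZMod m) * (s : ZMod m) * (d2 : ZMod m) = (d2 : ZMod m) := by
    have h1 : ((v * s * d2 : ℤ) : ZMod m) = (((d2 : ℤ) - u * d1 * d2 : ℤ) : ZMod m) := by
      congr 1
      have hv : v * s = 1 - u * d1 := by linarith [huv]
      rw [hv]; ring
    have h2 : ((u * d1 * d2 : ℤ) : ZMod m) = 0 := by
      push_cast
      rw [mul_assoc, key2, mul_zero]
    push_cast at h1 h2 ⊢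
    rw [h1]
    rw [h2, sub_zero]
  have hmem : ∀ t, Fmap m d1 d2 s v t ∈ galoisSubgroup m d1 d2 s := by
    intro t
    constructor
    · funext i
      fin_cases i
      · simp [polMat, Matrix.mulVec, dotProduct, Fin.sum_univ_four, Matrix.map_apply]
        linear_combination ((v : ZMod m) * t 2) * key2
      · simp [polMat, Matrix.mulVec, dotProduct, Fin.sum_univ_four, Matrix.map_apply]
        linear_combination (t 3) * key2
      · simp [polMat, Matrix.mulVec, dotProduct, Fin.sum_univ_four, Matrix.map_apply]
        linear_combination ((v : ZMod m) * t 0) * key2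
      · simp [polMat, Matrix.mulVec, dotProduct, Fin.sum_univ_four, Matrix.map_apply]
        linear_combination (t 1 : ZMod m) * key2
    · funext i
      fin_cases i
      · simp [dualPolMat, Matrix.mulVec, dotProduct, Fin.sum_univ_four,
          Matrix.map_apply, Pi.smul_apply, zsmul_eq_mul]
        linear_combination (-(t 0)) * key1
      · simp [dualPolMat, Matrix.mulVec, dotProduct, Fin.sum_univ_four,
          Matrix.map_apply, Pi.smul_apply, zsmul_eq_mul]
        ring
      · simp [dualPolMat, Matrix.mulVec, dotProduct, Fin.sum_univ_four,
          Matrix.map_apply, Pi.smul_apply, zsmul_eq_mul]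
        linear_combination (-(t 2)) * key1
      · simp [dualPolMat, Matrix.mulVec, dotProduct, Fin.sum_univ_four,
          Matrix.map_apply, Pi.smul_apply, zsmul_eq_mul]
        ring
  have hm2 : m = d2 * d1 := by rw [hm, mul_comm]
  let Fr : (Fin 4 → ZMod m) →+ (galoisSubgroup m d1 d2 s) :=
    (Fmap m d1 d2 s v).codRestrict _ hmem
  have hinj : Function.Injective Fr := by
    rw [injective_iff_map_eq_zero]
    intro t ht
    have ht' : Fmap m d1 d2 s v t = 0 := congrArg Subtype.val ht
    have g1 := congrFun (congrArg Prod.fst ht') 1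
    have g3 := congrFun (congrArg Prod.fst ht') 3
    have h0 := congrFun (congrArg Prod.snd ht') 0
    have h1 := congrFun (congrArg Prod.snd ht') 1
    have h2 := congrFun (congrArg Prod.snd ht') 2
    have h3 := congrFun (congrArg Prod.snd ht') 3
    simp at g1 g3 h0 h1 h2 h3
    obtain ⟨w1, hw1⟩ := exists_mul_of_mul_eq_zero' hm hd1 hd2 g1
    obtain ⟨w3, hw3⟩ := exists_mul_of_mul_eq_zero' hm hd1 hd2 g3
    funext i
    fin_cases i
    · exact h2
    · show t 1 = 0
      linear_combination hw1 - w1 * key1 - (v : ZMod m) * (s : ZMod m) * hw1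
        + (v : ZMod m) * h3
    · exact h0
    · show t 3 = 0
      linear_combination hw3 - w3 * key1 - (v : ZMod m) * (s : ZMod m) * hw3
        + (v : ZMod m) * h1
  have hsurj : Function.Surjective Fr := by
    rintro ⟨⟨a, b⟩, hab1, hab2⟩
    have e0 := congrFun hab1 0
    have e1 := congrFun hab1 1
    have e2 := congrFun hab1 2
    have e3 := congrFun hab1 3
    simp [polMat, Matrix.mulVec, dotProduct, Fin.sum_univ_four,
      Matrix.map_apply] at e0 e1 e2 e3
    have f0 := congrFun hab2 0
    have f1 := congrFun hab2 1
    have f2 := congrFun hab2 2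
    have f3 := congrFun hab2 3
    simp [dualPolMat, Matrix.mulVec, dotProduct, Fin.sum_univ_four,
      Matrix.map_apply, Pi.smul_apply, zsmul_eq_mul] at f0 f1 f2 f3
    obtain ⟨u0, ha0⟩ := exists_mul_of_mul_eq_zero' hm hd1 hd2 e2
    obtain ⟨u1, ha1⟩ := exists_mul_of_mul_eq_zero' hm2 hd2 hd1 e3
    obtain ⟨u2, ha2⟩ := exists_mul_of_mul_eq_zero' hm hd1 hd2 e0
    obtain ⟨u3, ha3⟩ := exists_mul_of_mul_eq_zero' hm2 hd2 hd1 e1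
    have hk1 : (d1 : ZMod m) * (b 3 + (s : ZMod m) * u1) = 0 := by
      linear_combination -f1 - (s : ZMod m) * ha1
    have hk3 : (d1 : ZMod m) * (b 1 - (s : ZMod m) * u3) = 0 := by
      linear_combination f3 + (s : ZMod m) * ha3
    obtain ⟨w1, hw1⟩ := exists_mul_of_mul_eq_zero' hm hd1 hd2 hk1
    obtain ⟨w3, hw3⟩ := exists_mul_of_mul_eq_zero' hm hd1 hd2 hk3
    refine ⟨![b 2, u1 - (d2 : ZMod m) * (v : ZMod m) * w1, b 0,
      u3 + (d2 : ZMod m) * (v : ZMod m) * w3], ?_⟩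
    apply Subtype.ext
    show Fmap m d1 d2 s v _ = (a, b)
    refine Prod.ext ?_ ?_ <;> funext i <;> fin_cases i
    · show -((v : ZMod m) * (d2 : ZMod m)) * b 2 = a 0
      linear_combination (v : ZMod m) * f0 + u0 * key1 + ((v : ZMod m) * (s : ZMod m) - 1) * ha0
    · show (d1 : ZMod m) * (u1 - (d2 : ZMod m) * (v : ZMod m) * w1) = a 1
      linear_combination -ha1 - (v : ZMod m) * w1 * key2
    · show (v : ZMod m) * (d2 : ZMod m) * b 0 = a 2
      linear_combination (v : ZMod m) * f2 + u2 * key1 + ((v : ZMod m) * (s : ZMod m) - 1) * ha2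
    · show (d1 : ZMod m) * (u3 + (d2 : ZMod m) * (v : ZMod m) * w3) = a 3
      linear_combination -ha3 + (v : ZMod m) * w3 * key2
    · show b 0 = b 0
      rfl
    · show (s : ZMod m) * (u3 + (d2 : ZMod m) * (v : ZMod m) * w3) = b 1
      linear_combination w3 * key1 - hw3
    · show b 2 = b 2
      rfl
    · show -(s : ZMod m) * (u1 - (d2 : ZMod m) * (v : ZMod m) * w1) = b 3
      linear_combination w1 * key1 - hw1
  exact ⟨(AddEquiv.ofBijective Fr ⟨hinj, hsurj⟩).symm⟩
end

section
/- Let n and N be positive integers, and let S be a connected subset of the space of n×n complex matrices such that every M ∈ S satisfies M^N = 1. If the identity matrix 1 belongs to S, then S = {1}. -/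
open Finset

/-- The geometric-sum map is continuous on matrices. -/
private lemma cont_geom_sum (n N : ℕ) :
    Continuous (fun M : Matrix (Fin n) (Fin n) ℂ => ∑ k ∈ range N, M ^ k) :=
  continuous_finset_sum _ fun k _ => continuous_pow k

/-- Let `S` be a connected subset of the `n×n` complex matrices such that
every `M ∈ S` satisfies `M^N = 1`. If the identity matrix belongs to `S`,
then `S = {1}`. -/
theorem connected_torsion_matrices_constant (n N : ℕ) (hn : 0 < n) (hN : 0 < N)
    (S : Set (Matrix (Fin n) (Fin n) ℂ)) (hconn : IsConnected S)
    (htor : ∀ M ∈ S, M ^ N = 1) (hone : (1 : Matrix (Fin n) (Fin n) ℂ) ∈ S) :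
    S = {1} := by
  set f : Matrix (Fin n) (Fin n) ℂ → Matrix (Fin n) (Fin n) ℂ :=
    fun M => ∑ k ∈ range N, M ^ k with hf
  -- U : open set of matrices where f M is a unit
  set U : Set (Matrix (Fin n) (Fin n) ℂ) := {M | IsUnit (f M)} with hU
  have hUopen : IsOpen U := by
    have : U = (fun M => (f M).det) ⁻¹' {(0 : ℂ)}ᶜ := by
      ext M
      simp [hU, Matrix.isUnit_iff_isUnit_det, isUnit_iff_ne_zero]
    rw [this]
    exact ((cont_geom_sum n N).matrix_det).isOpen_preimage _
      isClosed_singleton.isOpen_compl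
  have h1U : (1 : Matrix (Fin n) (Fin n) ℂ) ∈ U := by
    have : f 1 = (N : Matrix (Fin n) (Fin n) ℂ) := by
      simp [hf]
    rw [hU, Set.mem_setOf_eq, this]
    have : ((N : ℂ) ≠ 0) := Nat.cast_ne_zero.mpr hN.ne'
    have hu : IsUnit ((N : ℂ)) := isUnit_iff_ne_zero.mpr this
    have := hu.map (algebraMap ℂ (Matrix (Fin n) (Fin n) ℂ))
    simpa using this
  -- Any torsion matrix in U equals 1
  have hkey : ∀ M ∈ S, M ∈ U → M = 1 := by
    intro M hMS hMU
    have htor' := htor M hMS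
    have hgeom : f M * (M - 1) = 0 := by
      rw [hf]
      simp only
      rw [geom_sum_mul, htor', sub_self]
    have : f M * (M - 1) = f M * 0 := by rw [hgeom, mul_zero]
    have := hMU.mul_left_cancel this
    exact sub_eq_zero.mp this
  -- clopen argument
  apply Set.eq_singleton_iff_unique_mem.mpr
  refine ⟨hone, fun M hM => ?_⟩
  have hpre : IsPreconnected S := hconn.isPreconnected
  -- the set S ∩ U is clopen in S, nonempty, so by connectedness S ⊆ {1}
  by_contra hne
  -- split S into S ∩ U and S ∩ {x | x ≠ 1}... use isPreconnected_iff
  have hVopen : IsOpen ({1} : Set (Matrix (Fin n) (Fin n) ℂ))ᶜ :=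
    isClosed_singleton.isOpen_compl
  rcases isPreconnected_iff_subset_of_disjoint.mp hpre U ({1}ᶜ) hUopen hVopen
      (fun x hx => by
        by_cases h : x = 1
        · subst h; exact Set.mem_union_left _ h1U
        · exact Set.mem_union_right _ h)
      (by
        rw [Set.eq_empty_iff_forall_notMem]
        rintro x ⟨hxS, hxU, hx1⟩
        exact hx1 (hkey x hxS hxU)) with h | h
  · exact hne (hkey M hM (h hM))
  · exact h hone rfl
end

section
/- Let d₁ and d₂ be positive integers, and let φ̌ : (ℝ/ℤ)⁴ → (ℝ/ℤ)⁴ be the group homomorphism induced by the integer matrix [[0,0,−d₂,0],[0,0,0,−d₁],[d₂,0,0,0],[0,d₁,0,0]] acting on the 4-dimensional real torus (i.e., the j-th coordinate of φ̌(b) is the corresponding integer linear combination of the coordinates of b). Then the kernel of φ̌ is isomorphic, as an additive group, to (ℤ/d₁)² × (ℤ/d₂)². -/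
/-- The group homomorphism `φ̌ : (ℝ/ℤ)⁴ → (ℝ/ℤ)⁴` induced by the integer matrix
`dualPolMat d1 d2`. -/
noncomputable def dualPolHom (d1 d2 : ℕ) :
    (Fin 4 → AddCircle (1 : ℝ)) →+ (Fin 4 → AddCircle (1 : ℝ)) where
  toFun b := fun i => ∑ j, dualPolMat d1 d2 i j • b j
  map_zero' := by
    funext i
    simp
  map_add' a b := by
    funext i
    simp [smul_add, Finset.sum_add_distrib]

lemma torsion_iff (n : ℕ) [NeZero n] (x : AddCircle (1 : ℝ)) :
    (n : ℤ) • x = 0 ↔ ∃ j : ZMod n, ZMod.toAddCircle j = x := by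
  constructor
  · induction x using QuotientAddGroup.induction_on with
    | H r =>
      intro h
      rw [← AddCircle.coe_zsmul, AddCircle.coe_eq_zero_iff] at h
      obtain ⟨m, hm⟩ := h
      refine ⟨(m : ZMod n), ?_⟩
      rw [ZMod.toAddCircle_intCast]
      congr 1
      have hn : (n : ℝ) ≠ 0 := Nat.cast_ne_zero.mpr (NeZero.ne n)
      field_simp
      simpa [mul_comm] using hm
  · rintro ⟨j, rfl⟩
    rw [← map_zsmul]
    have : (n : ℤ) • j = 0 := by
      simp [ZMod.natCast_self]
    rw [this, map_zero]

lemma mem_ker_iff (d1 d2 : ℕ) (b : Fin 4 → AddCircle (1 : ℝ)) :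
    b ∈ (dualPolHom d1 d2).ker ↔
      (d2 : ℤ) • b 0 = 0 ∧ (d1 : ℤ) • b 1 = 0 ∧ (d2 : ℤ) • b 2 = 0 ∧ (d1 : ℤ) • b 3 = 0 := by
  rw [AddMonoidHom.mem_ker]
  constructor
  · intro h
    have h0 := congrFun h 0
    have h1 := congrFun h 1
    have h2 := congrFun h 2
    have h3 := congrFun h 3
    simp [dualPolHom, dualPolMat, Fin.sum_univ_four, Matrix.vecHead, Matrix.vecTail, neg_smul, neg_eq_zero] at h0 h1 h2 h3
    exact ⟨h2, h3, h0, h1⟩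
  · rintro ⟨h0, h1, h2, h3⟩
    funext i
    fin_cases i <;>
      simp [dualPolHom, dualPolMat, Fin.sum_univ_four, Matrix.vecHead, Matrix.vecTail, neg_smul, neg_eq_zero, h0, h1, h2, h3]


/-- The kernel of the dual polarization isogeny `φ̌` on the real torus `(ℝ/ℤ)⁴` is
isomorphic, as an additive group, to `(ℤ/d₁)² × (ℤ/d₂)²`. -/
theorem ker_dual_polarization_iso (d1 d2 : ℕ) (hd1 : 0 < d1) (hd2 : 0 < d2) :
    Nonempty ((dualPolHom d1 d2).ker ≃+ ((ZMod d1 × ZMod d1) × (ZMod d2 × ZMod d2))) := by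
  haveI : NeZero d1 := ⟨hd1.ne'⟩
  haveI : NeZero d2 := ⟨hd2.ne'⟩
  let h : ((ZMod d1 × ZMod d1) × (ZMod d2 × ZMod d2)) →+ (Fin 4 → AddCircle (1 : ℝ)) :=
    AddMonoidHom.mk' (fun x => ![ZMod.toAddCircle x.2.1, ZMod.toAddCircle x.1.1,
        ZMod.toAddCircle x.2.2, ZMod.toAddCircle x.1.2])
      (by
        intro x y
        funext i
        fin_cases i <;> simp [Matrix.cons_val_zero, Matrix.cons_val_one])
  have hinj : Function.Injective h := by
    intro x y hxy
    have e0 := congrFun hxy 0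
    have e1 := congrFun hxy 1
    have e2 := congrFun hxy 2
    have e3 := congrFun hxy 3
    simp only [h, AddMonoidHom.mk'_apply, Matrix.cons_val_zero, Matrix.cons_val_one,
      Matrix.head_cons, Matrix.cons_val_two, Matrix.tail_cons, Matrix.cons_val_three,
      ZMod.toAddCircle_inj] at e0 e1 e2 e3
    exact Prod.ext (Prod.ext e1 e3) (Prod.ext e0 e2)
  have hrange : h.range = (dualPolHom d1 d2).ker := by
    ext b
    constructor
    · rintro ⟨x, rfl⟩
      rw [mem_ker_iff]
      refine ⟨?_, ?_, ?_, ?_⟩ <;>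
        · simp only [h, AddMonoidHom.mk'_apply, Matrix.cons_val_zero, Matrix.cons_val_one,
            Matrix.head_cons, Matrix.cons_val_two, Matrix.tail_cons, Matrix.cons_val_three]
          rw [torsion_iff]
          exact ⟨_, rfl⟩
    · intro hb
      rw [mem_ker_iff] at hb
      obtain ⟨h0, h1, h2, h3⟩ := hb
      obtain ⟨j0, hj0⟩ := (torsion_iff d2 (b 0)).mp h0
      obtain ⟨j1, hj1⟩ := (torsion_iff d1 (b 1)).mp h1
      obtain ⟨j2, hj2⟩ := (torsion_iff d2 (b 2)).mp h2
      obtain ⟨j3, hj3⟩ := (torsion_iff d1 (b 3)).mp h3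
      refine ⟨((j1, j3), (j0, j2)), ?_⟩
      funext i
      fin_cases i <;> simpa [h]
  exact ⟨((AddMonoidHom.ofInjective hinj).trans (AddEquiv.addSubgroupCongr hrange)).symm⟩
end
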